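/- arXiv:2412.10697 — 6 statements merged into one kernel-verified Lean document; each statement's English description precedes it below -/
import Mathlib

section
/- For every integer n ≥ 0, the identity of real polynomials U_n(x) + U_{n−1}(x) = ∏_{k=1}^{n} 2(x − cos(2kπ/(2n+1))) holds (for n = 0 the empty product is 1). Equivalently, the partial Chebyshev polynomial U^e_{2n}(x) = U_n(x) + U_{n−1}(x) has exactly the simple zeroes cos(2kπ/(2n+1)), 1 ≤ k ≤ n. -/
/-!
On `cos θ` with `θ = 2kπ/(2n+1)` one has `(n+1)θ ≡ -nθ (mod 2π)`, so
`(Uₙ + Uₙ₋₁)(cos θ) · sin θ = sin((n+1)θ) + sin(nθ) = 0`. For `1 ≤ k ≤ n` these angles lie in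
`(0, π)`, so `sin θ ≠ 0` and the `n` values `cos θ` are distinct roots. Since `Uₙ + Uₙ₋₁` has
degree `n` and leading coefficient `2ⁿ`, it is `2ⁿ` times the product of the `X - cos θ`.
-/

open Polynomial Real

namespace Polynomial

theorem eq_C_leadingCoeff_mul_prod_X_sub_C_of_injOn {R ι : Type*} [CommRing R] [IsDomain R]
    {p : R[X]} {s : Finset ι} {r : ι → R} (hr : Set.InjOn r s)
    (hroot : ∀ i ∈ s, p.IsRoot (r i)) (hdeg : p.degree = s.card) :
    p = C p.leadingCoeff * ∏ i ∈ s, (X - C (r i)) := by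
  classical
  have hroots : p.roots = (s.image r).val := by
    refine roots_eq_of_degree_eq_card (fun x hx => ?_) ?_
    · obtain ⟨i, hi, rfl⟩ := Finset.mem_image.mp hx
      exact hroot i hi
    · rw [Finset.card_image_of_injOn hr, hdeg]
  have hcard : Multiset.card p.roots = p.natDegree := by
    rw [hroots, natDegree_eq_of_degree_eq_some hdeg, Finset.card_val,
      Finset.card_image_of_injOn hr]
  conv_lhs => rw [← C_leadingCoeff_mul_prod_multiset_X_sub_C hcard]
  rw [hroots, ← Finset.prod_eq_multiset_prod, Finset.prod_image hr]

namespace Chebyshev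

variable (R : Type*) [CommRing R] [IsDomain R] [NeZero (2 : R)]

theorem degree_U_natCast_sub_one_lt (n : ℕ) : (U R ((n : ℤ) - 1)).degree < (U R n).degree := by
  cases n with
  | zero => simp
  | succ m =>
    rw [Nat.cast_succ, add_sub_cancel_right, degree_U_natCast, ← Nat.cast_succ, degree_U_natCast]
    exact WithBot.coe_lt_coe.mpr m.lt_succ_self

theorem degree_U_add_U_sub_one (n : ℕ) : (U R n + U R ((n : ℤ) - 1)).degree = n := by
  rw [degree_add_eq_left_of_degree_lt (degree_U_natCast_sub_one_lt R n), degree_U_natCast]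

theorem leadingCoeff_U_add_U_sub_one (n : ℕ) :
    (U R n + U R ((n : ℤ) - 1)).leadingCoeff = 2 ^ n := by
  rw [leadingCoeff_add_of_degree_lt' (degree_U_natCast_sub_one_lt R n), leadingCoeff_U_natCast]

end Chebyshev

end Polynomial

open Polynomial.Chebyshev

theorem U_add_U_sub_one_real_cos_mul_sin (θ : ℝ) (n : ℤ) :
    (U ℝ n + U ℝ (n - 1)).eval (cos θ) * sin θ = sin ((n + 1) * θ) + sin (n * θ) := by
  rw [eval_add, add_mul, U_real_cos, U_real_cos]
  push_cast
  rw [sub_add_cancel]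

theorem two_mul_pi_div_mem_Ioo {n k : ℕ} (hk : k ∈ Finset.Icc 1 n) :
    2 * k * π / (2 * n + 1) ∈ Set.Ioo 0 π := by
  obtain ⟨hk₁, hkn⟩ := Finset.mem_Icc.mp hk
  have hk₁' : (1 : ℝ) ≤ k := by exact_mod_cast hk₁
  have hkn' : (k : ℝ) ≤ n := by exact_mod_cast hkn
  constructor
  · positivity
  · rw [div_lt_iff₀ (by positivity)]
    nlinarith [pi_pos]

theorem injOn_cos_two_mul_pi_div (n : ℕ) :
    Set.InjOn (fun k : ℕ => cos (2 * k * π / (2 * n + 1))) (Finset.Icc 1 n) := by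
  refine injOn_cos.comp (fun i _ j _ hij => ?_)
    (fun k hk => Set.Ioo_subset_Icc_self (two_mul_pi_div_mem_Ioo hk))
  field_simp at hij
  exact_mod_cast hij

theorem isRoot_U_add_U_sub_one_cos {n k : ℕ} (hk : k ∈ Finset.Icc 1 n) :
    (U ℝ n + U ℝ ((n : ℤ) - 1)).IsRoot (cos (2 * k * π / (2 * n + 1))) := by
  set θ := 2 * k * π / (2 * n + 1)
  have hsin : sin θ ≠ 0 := (sin_pos_of_mem_Ioo (two_mul_pi_div_mem_Ioo hk)).ne'
  have hangle : (((n : ℤ) : ℝ) + 1) * θ = ((k : ℤ) : ℝ) * (2 * π) - ((n : ℤ) : ℝ) * θ := by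
    simp only [θ, Int.cast_natCast]
    field_simp
    ring
  have h := U_add_U_sub_one_real_cos_mul_sin θ n
  rw [hangle, sin_int_mul_two_pi_sub, neg_add_cancel] at h
  exact (mul_eq_zero.mp h).resolve_right hsin

/-- For every `n ≥ 0`, the partial Chebyshev polynomial
`U^e_{2n} = Uₙ + U_{n-1}` factors as `∏_{k=1}^{n} 2(x − cos(2kπ/(2n+1)))`. -/
theorem partial_chebyshev_even_even_prod (n : ℕ) :
    Polynomial.Chebyshev.U ℝ (n : ℤ) + Polynomial.Chebyshev.U ℝ ((n : ℤ) - 1) =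
      ∏ k ∈ Finset.Icc 1 n,
        (Polynomial.C 2 *
          (Polynomial.X - Polynomial.C (Real.cos (2 * k * π / (2 * n + 1))))) := by
  have hcard : (Finset.Icc 1 n).card = n := by simp
  rw [eq_C_leadingCoeff_mul_prod_X_sub_C_of_injOn (injOn_cos_two_mul_pi_div n)
      (fun k hk => isRoot_U_add_U_sub_one_cos hk) (by rw [degree_U_add_U_sub_one, hcard]),
    leadingCoeff_U_add_U_sub_one, Finset.prod_mul_distrib, Finset.prod_const, hcard, C_pow]
end

section
/- For every integer n ≥ 0 the following identities of real polynomials hold: U_{2n} − U_{2n−1} − 1 = 2(x−1)·U_{n−1}·(U_n + U_{n−1}); U_{2n} + U_{2n−1} − 1 = 2(x+1)·U_{n−1}·(U_n − U_{n−1}); U_{2n} − U_{2n−1} + 1 = (U_n − U_{n−1})(U_n − U_{n−2}); and U_{2n} + U_{2n−1} + 1 = (U_n + U_{n−1})(U_n − U_{n−2}). -/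
open Polynomial Polynomial.Chebyshev

/-!
The addition formula `U_{m+n} = U_m U_n - U_{m-1} U_{n-1}` (from
`sin((m+n+1)θ) sin θ = sin((m+1)θ) sin((n+1)θ) - sin(mθ) sin(nθ)`) writes `U_{2n}` and `U_{2n-1}`
as quadratic forms in `U_n, U_{n-1}, U_{n-2}`. Taking `m = -n` it also gives the Cassini-type
identity `U_{n-1}^2 - U_n U_{n-2} = 1`, which supplies the constant `± 1`; with the three-term
recurrence each of the four factorizations becomes a ring identity.
-/

namespace Polynomial.Chebyshev

variable (R : Type*) [CommRing R]

theorem U_add (m n : ℤ) : U R (m + n) = U R m * U R n - U R (m - 1) * U R (n - 1) := by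
  induction n using Polynomial.Chebyshev.induct with
  | zero => simp
  | one => rw [U_add_one, U_one, sub_self, U_zero, mul_one, mul_comm]
  | add_two n ih1 ih2 =>
    have h₁ := U_add_two R (m + n)
    have h₂ := U_add_two R n
    linear_combination (norm := ring_nf)
      h₁ + 2 * (X : R[X]) * ih1 - ih2 - U R m * h₂ + U R (m - 1) * U_add_one R (n : ℤ)
  | neg_add_one n ih1 ih2 =>
    have h₁ := U_sub_one R (m - n)
    have h₂ := U_sub_one R (-n)
    have h₃ := U_sub_one R (-n - 1)
    linear_combination (norm := ring_nf)
      h₁ + 2 * (X : R[X]) * ih1 - ih2 - U R m * h₂ + U R (m - 1) * h₃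

theorem U_sub_one_sq_sub_U_mul_U_sub_two (n : ℤ) : U R (n - 1) ^ 2 - U R n * U R (n - 2) = 1 := by
  have h := U_add R n (-n)
  rw [add_neg_cancel, U_zero, U_neg, U_neg_sub_one] at h
  linear_combination -h

theorem U_two_mul (n : ℤ) : U R (2 * n) = U R n ^ 2 - U R (n - 1) ^ 2 := by
  rw [two_mul, U_add]; ring

theorem U_two_mul_sub_one (n : ℤ) :
    U R (2 * n - 1) = U R n * U R (n - 1) - U R (n - 1) * U R (n - 2) := by
  rw [show 2 * n - 1 = n + (n - 1) by ring, U_add, sub_sub, one_add_one_eq_two]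

theorem U_two_mul_factorizations (n : ℤ) :
    U R (2 * n) - U R (2 * n - 1) - 1 = 2 * (X - 1) * U R (n - 1) * (U R n + U R (n - 1)) ∧
    U R (2 * n) + U R (2 * n - 1) - 1 = 2 * (X + 1) * U R (n - 1) * (U R n - U R (n - 1)) ∧
    U R (2 * n) - U R (2 * n - 1) + 1 = (U R n - U R (n - 1)) * (U R n - U R (n - 2)) ∧
    U R (2 * n) + U R (2 * n - 1) + 1 = (U R n + U R (n - 1)) * (U R n - U R (n - 2)) := by
  have h2n := U_two_mul R n
  have h2n1 := U_two_mul_sub_one R n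
  have hcassini := U_sub_one_sq_sub_U_mul_U_sub_two R n
  have hrec := U_sub_two R n
  refine ⟨?_, ?_, ?_, ?_⟩
  · linear_combination h2n - h2n1 + hcassini + (U R n + U R (n - 1)) * hrec
  · linear_combination h2n + h2n1 + hcassini + (U R n - U R (n - 1)) * hrec
  · linear_combination h2n - h2n1 - hcassini
  · linear_combination h2n + h2n1 - hcassini

end Polynomial.Chebyshev

/-- For every `n ≥ 0`:
`U_{2n} − U_{2n-1} − 1 = 2(x−1)U_{n-1}(Uₙ + U_{n-1})`,
`U_{2n} + U_{2n-1} − 1 = 2(x+1)U_{n-1}(Uₙ − U_{n-1})`,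
`U_{2n} − U_{2n-1} + 1 = (Uₙ − U_{n-1})(Uₙ − U_{n-2})`, and
`U_{2n} + U_{2n-1} + 1 = (Uₙ + U_{n-1})(Uₙ − U_{n-2})`,
as identities of real polynomials (with `U_{-1} = 0`, `U_{-2} = -1`). -/
theorem chebyshev_U_even_factorizations' (n : ℕ) :
    U ℝ (2 * (n : ℤ)) - U ℝ (2 * (n : ℤ) - 1) - 1 =
      2 * (X - 1) * U ℝ ((n : ℤ) - 1) * (U ℝ (n : ℤ) + U ℝ ((n : ℤ) - 1)) ∧
    U ℝ (2 * (n : ℤ)) + U ℝ (2 * (n : ℤ) - 1) - 1 =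
      2 * (X + 1) * U ℝ ((n : ℤ) - 1) * (U ℝ (n : ℤ) - U ℝ ((n : ℤ) - 1)) ∧
    U ℝ (2 * (n : ℤ)) - U ℝ (2 * (n : ℤ) - 1) + 1 =
      (U ℝ (n : ℤ) - U ℝ ((n : ℤ) - 1)) * (U ℝ (n : ℤ) - U ℝ ((n : ℤ) - 2)) ∧
    U ℝ (2 * (n : ℤ)) + U ℝ (2 * (n : ℤ) - 1) + 1 =
      (U ℝ (n : ℤ) + U ℝ ((n : ℤ) - 1)) * (U ℝ (n : ℤ) - U ℝ ((n : ℤ) - 2)) :=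
  U_two_mul_factorizations ℝ n
end

section
/- For every integer n ≥ 0 the following identities of real polynomials hold: U_{2n+1} − U_{2n} − 1 = 2(x−1)·U_n·(U_n + U_{n−1}); U_{2n+1} + U_{2n} + 1 = 2(x+1)·U_n·(U_n − U_{n−1}); U_{2n+1} − U_{2n} + 1 = (U_n − U_{n−1})(U_{n+1} − U_{n−1}); and U_{2n+1} + U_{2n} − 1 = (U_n + U_{n−1})(U_{n+1} − U_{n−1}). -/
open Polynomial Polynomial.Chebyshev

lemma U_det' (n : ℕ) : U ℝ ((n:ℤ) + 1) * U ℝ ((n:ℤ) - 1) - U ℝ (n:ℤ) ^ 2 = -1 := by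
  induction n with
  | zero => simp [U_one, U_zero, U_neg_one]
  | succ k ih =>
    push_cast
    rw [show ((k:ℤ) + 1 - 1) = (k:ℤ) by ring, show ((k:ℤ) + 1 + 1) = (k:ℤ) + 2 by ring]
    have e := U_add_two ℝ (k:ℤ)
    have e1 := U_add_one ℝ (k:ℤ)
    linear_combination U ℝ (k:ℤ) * e - U ℝ ((k:ℤ)+1) * e1 + ih

lemma U_double' (n : ℕ) :
    U ℝ (2 * (n:ℤ) + 1) = U ℝ (n:ℤ) * (U ℝ ((n:ℤ) + 1) - U ℝ ((n:ℤ) - 1)) ∧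
    U ℝ (2 * (n:ℤ)) = U ℝ ((n:ℤ) - 1) * (U ℝ ((n:ℤ) + 1) - U ℝ ((n:ℤ) - 1)) + 1 := by
  induction n with
  | zero => norm_num [U_one, U_zero, U_neg_one]
  | succ k ih =>
    obtain ⟨ih1, ih2⟩ := ih
    have det := U_det' k
    push_cast
    rw [show (2 * ((k:ℤ) + 1) + 1) = 2 * (k:ℤ) + 1 + 2 by ring,
      show (2 * ((k:ℤ) + 1)) = 2 * (k:ℤ) + 2 by ring,
      show ((k:ℤ) + 1 + 1) = (k:ℤ) + 2 by ring,
      show ((k:ℤ) + 1 - 1) = (k:ℤ) by ring]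
    have e2k1 := U_add_two ℝ (2 * (k:ℤ) + 1)
    rw [show (2 * (k:ℤ) + 1 + 1) = 2 * (k:ℤ) + 2 by ring] at e2k1
    have e2k := U_add_two ℝ (2 * (k:ℤ))
    rw [show (2 * (k:ℤ) + 1) = 2 * (k:ℤ) + 1 by ring] at e2k
    have en := U_add_two ℝ (k:ℤ)
    have e1 := U_add_one ℝ (k:ℤ)
    constructor
    · rw [e2k1, e2k, en, ih1, ih2, e1]
      rw [e1] at det
      linear_combination (-2 * X) * det
    · rw [e2k, en, ih1, ih2, e1]
      rw [e1] at det
      linear_combination (-2 : ℝ[X]) * det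

/-- For every `n ≥ 0`:
`U_{2n+1} − U_{2n} − 1 = 2(x−1)Uₙ(Uₙ + U_{n-1})`,
`U_{2n+1} + U_{2n} + 1 = 2(x+1)Uₙ(Uₙ − U_{n-1})`,
`U_{2n+1} − U_{2n} + 1 = (Uₙ − U_{n-1})(U_{n+1} − U_{n-1})`, and
`U_{2n+1} + U_{2n} − 1 = (Uₙ + U_{n-1})(U_{n+1} − U_{n-1})`,
as identities of real polynomials (with `U_{-1} = 0`). -/
theorem chebyshev_U_odd_factorizations' (n : ℕ) :
    U ℝ (2 * (n : ℤ) + 1) - U ℝ (2 * (n : ℤ)) - 1 =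
      2 * (X - 1) * U ℝ (n : ℤ) * (U ℝ (n : ℤ) + U ℝ ((n : ℤ) - 1)) ∧
    U ℝ (2 * (n : ℤ) + 1) + U ℝ (2 * (n : ℤ)) + 1 =
      2 * (X + 1) * U ℝ (n : ℤ) * (U ℝ (n : ℤ) - U ℝ ((n : ℤ) - 1)) ∧
    U ℝ (2 * (n : ℤ) + 1) - U ℝ (2 * (n : ℤ)) + 1 =
      (U ℝ (n : ℤ) - U ℝ ((n : ℤ) - 1)) * (U ℝ ((n : ℤ) + 1) - U ℝ ((n : ℤ) - 1)) ∧
    U ℝ (2 * (n : ℤ) + 1) + U ℝ (2 * (n : ℤ)) - 1 =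
      (U ℝ (n : ℤ) + U ℝ ((n : ℤ) - 1)) * (U ℝ ((n : ℤ) + 1) - U ℝ ((n : ℤ) - 1)) := by
  obtain ⟨h1, h2⟩ := U_double' n
  have det := U_det' n
  have e1 := U_add_one ℝ (n:ℤ)
  refine ⟨?_, ?_, ?_, ?_⟩
  · rw [h1, h2, e1]; rw [e1] at det; linear_combination (-2 : ℝ[X]) * det
  · rw [h1, h2, e1]; rw [e1] at det; linear_combination (2 : ℝ[X]) * det
  · rw [h1, h2]; ring
  · rw [h1, h2]; ring
end

section
/- Let n ≥ 1 and let α be a real number with α ≠ 2, α ≠ −2, and Ũ_n(α) ≠ 0 (equivalently, α is not an eigenvalue of A_n). Then the matrix A_n − αI is invertible and ⟨1, (A_n − αI)^{−1} 1⟩ = (2−α)^{−2} · { n(2−α) + 2 − 2(Ũ_{n−1}(α)/Ũ_n(α) + 1/Ũ_n(α)) }, where 1 denotes the all-ones vector in ℝ^n and ⟨·,·⟩ the standard inner product. -/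
open Polynomial Polynomial.Chebyshev Matrix

/-- The adjacency matrix of the path graph `Pₙ`. -/
def pathAdj (n : ℕ) : Matrix (Fin n) (Fin n) ℝ :=
  Matrix.of fun i j => if (i : ℕ) + 1 = (j : ℕ) ∨ (j : ℕ) + 1 = (i : ℕ) then 1 else 0

namespace PathResolventAux

/-- The evaluated Chebyshev polynomial `Ũₖ(α) = Uₖ(α/2)`, indexed by `ℤ`. -/
noncomputable def fU (α : ℝ) (k : ℤ) : ℝ := (U ℝ k).eval (α / 2)

lemma fU_zero (α : ℝ) : fU α 0 = 1 := by simp [fU]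

lemma fU_neg_one (α : ℝ) : fU α (-1) = 0 := by simp [fU]

lemma fU_one (α : ℝ) : fU α 1 = α := by
  show (U ℝ 1).eval (α / 2) = α
  rw [U_one]
  simp only [eval_mul, eval_ofNat, eval_X]
  ring

lemma fU_rec (α : ℝ) (m : ℤ) : fU α (m + 1) = α * fU α m - fU α (m - 1) := by
  show (U ℝ (m + 1)).eval (α / 2)
      = α * (U ℝ m).eval (α / 2) - (U ℝ (m - 1)).eval (α / 2)
  have h := U_add_two ℝ (m - 1)
  rw [show m - 1 + 2 = m + 1 by ring, show m - 1 + 1 = m by ring] at h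
  rw [h]
  simp only [eval_sub, eval_mul, eval_ofNat, eval_X]
  ring

lemma sum_if_eq' (n c : ℕ) (w : ℤ → ℝ) :
    ∑ j : Fin n, (if c = (j : ℕ) then w (j : ℕ) else 0)
      = if c < n then w (c : ℤ) else 0 := by
  by_cases h : c < n
  · rw [if_pos h]
    have hcongr : ∀ j : Fin n, (if c = (j : ℕ) then w (j : ℕ) else 0)
        = (if (⟨c, h⟩ : Fin n) = j then w (j : ℕ) else 0) := by
      intro j
      by_cases hc : c = (j : ℕ)
      · rw [if_pos hc, if_pos (Fin.ext hc)]
      · rw [if_neg hc, if_neg (fun he => hc (by rw [← he]))]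
    rw [Finset.sum_congr rfl (fun j _ => hcongr j), Finset.sum_ite_eq]
    simp
  · rw [if_neg h]
    apply Finset.sum_eq_zero
    intro j _
    have : c ≠ (j : ℕ) := by have := j.2; omega
    rw [if_neg this]

lemma mulVec_eq (n : ℕ) (α : ℝ) (w : ℤ → ℝ)
    (hw : ∀ k : ℤ, k < 0 ∨ (n : ℤ) ≤ k → w k = 0) (i : Fin n) :
    ((pathAdj n - α • (1 : Matrix (Fin n) (Fin n) ℝ)) *ᵥ (fun j : Fin n => w (j : ℕ))) i
      = w ((i : ℕ) + 1) + w (((i : ℕ) : ℤ) - 1) - α * w (i : ℕ) := by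
  rw [sub_mulVec, smul_mulVec, one_mulVec]
  simp only [Pi.sub_apply, Pi.smul_apply, smul_eq_mul]
  congr 1
  have hexp : (pathAdj n *ᵥ (fun j : Fin n => w (j : ℕ))) i
      = ∑ j : Fin n, ((if (i : ℕ) + 1 = (j : ℕ) then w (j : ℕ) else 0)
          + (if (j : ℕ) + 1 = (i : ℕ) then w (j : ℕ) else 0)) := by
    simp only [mulVec, dotProduct, pathAdj, Matrix.of_apply]
    apply Finset.sum_congr rfl
    intro j _
    by_cases h1 : (i : ℕ) + 1 = (j : ℕ)
    · by_cases h2 : (j : ℕ) + 1 = (i : ℕ)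
      · exfalso; omega
      · simp [h1, h2]
    · by_cases h2 : (j : ℕ) + 1 = (i : ℕ) <;> simp [h1, h2]
  rw [hexp, Finset.sum_add_distrib]
  congr 1
  · rw [sum_if_eq' n ((i : ℕ) + 1) w]
    by_cases h : (i : ℕ) + 1 < n
    · rw [if_pos h]
      congr 1 <;> omega
    · rw [if_neg h, hw _ (Or.inr (by omega))]
  · by_cases hi : 1 ≤ (i : ℕ)
    · have hcongr : ∀ j : Fin n, (if (j : ℕ) + 1 = (i : ℕ) then w (j : ℕ) else 0)
          = (if (i : ℕ) - 1 = (j : ℕ) then w (j : ℕ) else 0) := by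
        intro j
        by_cases h : (j : ℕ) + 1 = (i : ℕ)
        · rw [if_pos h, if_pos (by omega)]
        · rw [if_neg h, if_neg (by omega)]
      rw [Finset.sum_congr rfl (fun j _ => hcongr j), sum_if_eq' n ((i : ℕ) - 1) w,
        if_pos (by omega : (i : ℕ) - 1 < n)]
      congr 1
      omega
    · have hz : ∑ j : Fin n, (if (j : ℕ) + 1 = (i : ℕ) then w (j : ℕ) else 0) = 0 :=
        Finset.sum_eq_zero (fun j _ => by rw [if_neg (by omega)])
      rw [hz, hw _ (Or.inl (by omega))]

end PathResolventAux

open PathResolventAux in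
/-- For `n ≥ 1` and real `α` with `α ≠ ±2` and `Ũₙ(α) = Uₙ(α/2) ≠ 0`,
the matrix `Aₙ − αI` is invertible and
`⟨1, (Aₙ − αI)⁻¹ 1⟩ = (2−α)⁻² (n(2−α) + 2 − 2(Ũ_{n-1}(α)/Ũₙ(α) + 1/Ũₙ(α)))`. -/
theorem path_resolvent_sum (n : ℕ) (hn : 1 ≤ n) (α : ℝ) (h2 : α ≠ 2) (h2' : α ≠ -2)
    (hU : (U ℝ (n : ℤ)).eval (α / 2) ≠ 0) :
    IsUnit (pathAdj n - α • (1 : Matrix (Fin n) (Fin n) ℝ)) ∧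
    ∑ i : Fin n, ∑ j : Fin n, (pathAdj n - α • (1 : Matrix (Fin n) (Fin n) ℝ))⁻¹ i j =
      (2 - α)⁻¹ ^ 2 *
        ((n : ℝ) * (2 - α) + 2 -
          2 * ((U ℝ ((n : ℤ) - 1)).eval (α / 2) / (U ℝ (n : ℤ)).eval (α / 2) +
            1 / (U ℝ (n : ℤ)).eval (α / 2))) := by
  classical
  set M : Matrix (Fin n) (Fin n) ℝ := pathAdj n - α • (1 : Matrix (Fin n) (Fin n) ℝ) with hM
  have hfn : fU α (n : ℤ) ≠ 0 := hU
  have hα : (2 : ℝ) - α ≠ 0 := fun h => h2 (by linarith)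
  have hα2 : α - 2 ≠ 0 := fun h => h2 (by linarith)
  -- trivial kernel
  have hker : ∀ v : Fin n → ℝ, M *ᵥ v = 0 → v = 0 := by
    intro v hv
    set w : ℤ → ℝ := fun k => if h : 0 ≤ k ∧ k < (n : ℤ) then v ⟨k.toNat, by omega⟩ else 0
      with hwdef
    have hwb : ∀ k : ℤ, k < 0 ∨ (n : ℤ) ≤ k → w k = 0 := by
      intro k hk
      simp only [hwdef]
      rw [dif_neg (by omega)]
    have hwv : ∀ j : Fin n, w (j : ℕ) = v j := by
      intro j
      simp only [hwdef]
      rw [dif_pos (show (0:ℤ) ≤ ((j : ℕ) : ℤ) ∧ ((j : ℕ) : ℤ) < (n : ℤ) by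
        have := j.2; omega)]
      congr 1
    have hE : ∀ i : Fin n, w ((i : ℕ) + 1) + w (((i : ℕ) : ℤ) - 1) - α * w (i : ℕ) = 0 := by
      intro i
      have hme := PathResolventAux.mulVec_eq n α w hwb i
      have hveq : (fun j : Fin n => w (j : ℕ)) = v := funext hwv
      rw [hveq, hv] at hme
      simpa using hme.symm
    have hclaim : ∀ k : ℕ, k < n → w k = w 0 * fU α k := by
      intro k
      induction k using Nat.strong_induction_on with
      | _ k ih =>
        match k with
        | 0 =>
          intro _
          push_cast
          rw [fU_zero]
          ring
        | 1 =>
          intro h1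
          have hE0 := hE ⟨0, by omega⟩
          simp only [Fin.val_mk] at hE0
          norm_num at hE0
          rw [hwb (-1) (Or.inl (by norm_num))] at hE0
          push_cast
          rw [fU_one]
          linarith
        | (m + 2) =>
          intro hlt
          have hE' := hE ⟨m + 1, by omega⟩
          simp only [Fin.val_mk] at hE'
          push_cast at hE'
          rw [show (m : ℤ) + 1 + 1 = (m : ℤ) + 2 by ring,
            show (m : ℤ) + 1 - 1 = (m : ℤ) by ring] at hE'
          have ih1 := ih (m + 1) (by omega) (by omega)
          have ih0 := ih m (by omega) (by omega)
          push_cast at ih1 ih0 ⊢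
          have hfr := fU_rec α ((m : ℤ) + 1)
          rw [show (m : ℤ) + 1 + 1 = (m : ℤ) + 2 by ring,
            show (m : ℤ) + 1 - 1 = (m : ℤ) by ring] at hfr
          linear_combination hE' - w 0 * hfr + α * ih1 - ih0
    have hlast := hE ⟨n - 1, by omega⟩
    simp only [Fin.val_mk] at hlast
    rw [show ((n - 1 : ℕ) : ℤ) = (n : ℤ) - 1 by omega] at hlast
    rw [show ((n : ℤ) - 1) + 1 = (n : ℤ) by ring] at hlast
    have hwn : w (n : ℤ) = 0 := hwb _ (Or.inr le_rfl)
    have hwn1 : w ((n : ℤ) - 1) = w 0 * fU α ((n : ℤ) - 1) := by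
      have h := hclaim (n - 1) (by omega)
      rwa [show ((n - 1 : ℕ) : ℤ) = (n : ℤ) - 1 by omega] at h
    have hwn2 : w ((n : ℤ) - 1 - 1) = w 0 * fU α ((n : ℤ) - 1 - 1) := by
      rcases Nat.lt_or_ge 1 n with h | h
      · have h' := hclaim (n - 2) (by omega)
        rwa [show ((n - 2 : ℕ) : ℤ) = (n : ℤ) - 1 - 1 by omega] at h'
      · have hn1 : n = 1 := by omega
        subst hn1
        rw [show ((1 : ℕ) : ℤ) - 1 - 1 = -1 by norm_num, fU_neg_one,
          hwb (-1) (Or.inl (by norm_num))]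
        ring
    rw [hwn, hwn1, hwn2] at hlast
    have hr := fU_rec α ((n : ℤ) - 1)
    rw [show ((n : ℤ) - 1) + 1 = (n : ℤ) by ring] at hr
    have hw0 : w 0 = 0 := by
      have hz : w 0 * fU α (n : ℤ) = 0 := by
        rw [hr]
        linear_combination -hlast
      exact (mul_eq_zero.1 hz).resolve_right hfn
    funext j
    have hj := hclaim (j : ℕ) j.2
    rw [hw0, zero_mul] at hj
    rw [← hwv j, hj]
    simp
  have hdet : M.det ≠ 0 := by
    intro hd
    obtain ⟨v, hv0, hv⟩ := (Matrix.exists_mulVec_eq_zero_iff).2 hd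
    exact hv0 (hker v hv)
  have hunit : IsUnit M := (Matrix.isUnit_iff_isUnit_det M).2 (isUnit_iff_ne_zero.2 hdet)
  refine ⟨hunit, ?_⟩
  -- the explicit solution
  set c : ℝ := (2 - α)⁻¹ with hc
  have hcval : (2 - α) * c = 1 := by rw [hc, mul_inv_cancel₀ hα]
  set X : ℤ → ℝ := fun k => c - c / fU α (n : ℤ) * (fU α k + fU α ((n : ℤ) - 1 - k)) with hX
  have hXm1 : X (-1) = 0 := by
    simp only [hX]
    rw [fU_neg_one, show (n : ℤ) - 1 - (-1) = (n : ℤ) by ring, zero_add,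
      div_mul_cancel₀ c hfn, sub_self]
  have hXn : X (n : ℤ) = 0 := by
    simp only [hX]
    rw [show (n : ℤ) - 1 - (n : ℤ) = -1 by ring, fU_neg_one, add_zero,
      div_mul_cancel₀ c hfn, sub_self]
  have hXrec : ∀ k : ℤ, X (k + 1) + X (k - 1) - α * X k = 1 := by
    intro k
    have h1 := fU_rec α k
    have h2 := fU_rec α ((n : ℤ) - 1 - k)
    rw [show (n : ℤ) - 1 - k + 1 = (n : ℤ) - 1 - (k - 1) by ring,
      show (n : ℤ) - 1 - k - 1 = (n : ℤ) - 1 - (k + 1) by ring] at h2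
    simp only [hX]
    linear_combination hcval - c / fU α (n : ℤ) * h1 - c / fU α (n : ℤ) * h2
  set w : ℤ → ℝ := fun k => if 0 ≤ k ∧ k < (n : ℤ) then X k else 0 with hw
  have hwb : ∀ k : ℤ, k < 0 ∨ (n : ℤ) ≤ k → w k = 0 := by
    intro k hk
    simp only [hw]
    rw [if_neg (by omega)]
  have hsol : M *ᵥ (fun j : Fin n => w (j : ℕ)) = 1 := by
    funext i
    rw [PathResolventAux.mulVec_eq n α w hwb i]
    have hwi : w (i : ℕ) = X (i : ℕ) := by
      simp only [hw]
      rw [if_pos (by have := i.2; omega)]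
    have hwp : w (((i : ℕ) : ℤ) + 1) = X (((i : ℕ) : ℤ) + 1) := by
      rcases Nat.lt_or_ge ((i : ℕ) + 1) n with h | h
      · simp only [hw]
        rw [if_pos (by omega)]
      · have hz : ((i : ℕ) : ℤ) + 1 = (n : ℤ) := by have := i.2; omega
        rw [hz, hwb _ (Or.inr le_rfl), hXn]
    have hwm : w (((i : ℕ) : ℤ) - 1) = X (((i : ℕ) : ℤ) - 1) := by
      rcases Nat.lt_or_ge 0 (i : ℕ) with h | h
      · simp only [hw]
        rw [if_pos (by have := i.2; omega)]
      · have h0 : ((i : ℕ) : ℤ) - 1 = -1 := by omega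
        rw [h0, hwb (-1) (Or.inl (by norm_num)), hXm1]
    rw [Pi.one_apply, hwp, hwm, hwi]
    exact hXrec ((i : ℕ) : ℤ)
  have hinv1 : M⁻¹ *ᵥ (1 : Fin n → ℝ) = fun j : Fin n => w (j : ℕ) := by
    rw [← hsol, Matrix.mulVec_mulVec, Matrix.nonsing_inv_mul M (isUnit_iff_ne_zero.2 hdet),
      Matrix.one_mulVec]
  have hsum : ∑ i : Fin n, ∑ j : Fin n, M⁻¹ i j = ∑ i : Fin n, w (i : ℕ) := by
    calc ∑ i : Fin n, ∑ j : Fin n, M⁻¹ i j = ∑ i : Fin n, (M⁻¹ *ᵥ (1 : Fin n → ℝ)) i := by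
          apply Finset.sum_congr rfl
          intro i _
          simp [Matrix.mulVec, dotProduct]
      _ = ∑ i : Fin n, w (i : ℕ) := by
          apply Finset.sum_congr rfl
          intro i _
          rw [hinv1]
  have htel : ∀ m : ℕ, (∑ k ∈ Finset.range m, fU α (k : ℤ)) * (α - 2)
      = fU α (m : ℤ) - fU α ((m : ℤ) - 1) - 1 := by
    intro m
    induction m with
    | zero => norm_num [fU_zero, fU_neg_one]
    | succ m ih =>
      rw [Finset.sum_range_succ, add_mul, ih]
      push_cast
      rw [show (m : ℤ) + 1 - 1 = (m : ℤ) by ring, fU_rec α (m : ℤ)]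
      ring
  have hsum2 : ∑ i : Fin n, w (i : ℕ)
      = (n : ℝ) * c - c / fU α (n : ℤ) * (2 * ∑ k ∈ Finset.range n, fU α (k : ℤ)) := by
    have h1 : ∑ i : Fin n, w (i : ℕ) = ∑ k ∈ Finset.range n, X (k : ℤ) := by
      rw [Fin.sum_univ_eq_sum_range (fun k : ℕ => w (k : ℤ))]
      apply Finset.sum_congr rfl
      intro k hk
      rw [Finset.mem_range] at hk
      simp only [hw]
      rw [if_pos (by omega)]
    have h3 : ∑ k ∈ Finset.range n, fU α ((n : ℤ) - 1 - k) = ∑ k ∈ Finset.range n, fU α (k : ℤ) := by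
      rw [← Finset.sum_range_reflect (fun k : ℕ => fU α (k : ℤ)) n]
      apply Finset.sum_congr rfl
      intro k hk
      rw [Finset.mem_range] at hk
      congr 1
      omega
    rw [h1]
    simp only [hX]
    rw [Finset.sum_sub_distrib, Finset.sum_const, Finset.card_range, nsmul_eq_mul,
      ← Finset.mul_sum, Finset.sum_add_distrib, h3]
    ring
  have hS : (∑ k ∈ Finset.range n, fU α (k : ℤ))
      = (fU α (n : ℤ) - fU α ((n : ℤ) - 1) - 1) / (α - 2) := by
    rw [eq_div_iff hα2]
    exact htel n
  rw [hsum, hsum2, hS, hc]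
  simp only [fU]
  field_simp
  ring
end

section
/- Let n ≥ 1 and let 1 ≤ k ≤ n. If g ∈ ℝ^n is a nonzero vector with A_n g = 2cos(kπ/(n+1)) g, then the sum of the entries of g is zero if and only if k is even. Equivalently, the eigenspace of A_n associated to the eigenvalue 2cos(kπ/(n+1)) is orthogonal to the all-ones vector if and only if k is even. -/
open Matrix Real Finset

lemma pathAdj_mulVec_apply (n : ℕ) (g : Fin n → ℝ) (G : ℕ → ℝ)
    (hG : ∀ i : ℕ, G i = if h : i < n then g ⟨i, h⟩ else 0)
    (m : ℕ) (hm : m < n) :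
    (pathAdj n *ᵥ g) ⟨m, hm⟩ = G (m + 1) + (if m = 0 then 0 else G (m - 1)) := by
  have hGz : ∀ i, ¬ i < n → G i = 0 := fun i h => by rw [hG]; simp [h]
  have hGg : ∀ (j : Fin n), g j = G j := fun j => by rw [hG]; simp
  set f : ℕ → ℝ := fun j => (if m + 1 = j ∨ j + 1 = m then 1 else 0) * G j with hf
  have step1 : (pathAdj n *ᵥ g) ⟨m, hm⟩ = ∑ j ∈ Finset.range n, f j := by
    rw [← Fin.sum_univ_eq_sum_range f n]
    simp only [mulVec, dotProduct, pathAdj, Matrix.of_apply]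
    exact Finset.sum_congr rfl fun j _ => by rw [hGg j]
  have step2 : ∑ j ∈ Finset.range n, f j = ∑ j ∈ Finset.range (n + 2), f j := by
    apply Finset.sum_subset
    · intro x hx; simp only [Finset.mem_range] at *; omega
    · intro j hj hnj
      simp only [Finset.mem_range] at hj hnj
      have : ¬ j < n := by omega
      simp [hf, hGz j this]
  have step3 : ∑ j ∈ Finset.range (n + 2), f j =
      (∑ j ∈ Finset.range (n + 2), (if m + 1 = j then G j else 0)) +
      ∑ j ∈ Finset.range (n + 2), (if j + 1 = m then G j else 0) := by
    rw [← Finset.sum_add_distrib]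
    apply Finset.sum_congr rfl
    intro j _
    by_cases h1 : m + 1 = j <;> by_cases h2 : j + 1 = m <;> simp [hf, h1, h2] <;> omega
  have s1 : (∑ j ∈ Finset.range (n + 2), (if m + 1 = j then G j else 0)) = G (m + 1) := by
    rw [Finset.sum_ite_eq]
    simp only [Finset.mem_range, if_pos (by omega : m + 1 < n + 2)]
  have s2 : (∑ j ∈ Finset.range (n + 2), (if j + 1 = m then G j else 0)) =
      (if m = 0 then 0 else G (m - 1)) := by
    rcases m with _ | m'
    · simp
    · have hcond : ∀ j : ℕ, (j + 1 = m' + 1) ↔ (j = m') := by omega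
      simp only [hcond]
      rw [Finset.sum_ite_eq']
      simp only [Finset.mem_range, if_pos (by omega : m' < n + 2)]
      simp
  rw [step1, step2, step3, s1, s2]

/-- For `n ≥ 1` and `1 ≤ k ≤ n`, a nonzero eigenvector `g` of `Aₙ`
for the eigenvalue `2cos(kπ/(n+1))` has entry sum zero if and only if `k` is even. -/
theorem path_eigenvector_sum_eq_zero_iff (n : ℕ) (hn : 1 ≤ n) (k : ℕ)
    (hk1 : 1 ≤ k) (hkn : k ≤ n) (g : Fin n → ℝ) (hg : g ≠ 0)
    (heig : (pathAdj n) *ᵥ g = (2 * Real.cos (k * π / (n + 1))) • g) :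
    (∑ i : Fin n, g i = 0) ↔ Even k := by
  set θ : ℝ := k * π / (n + 1) with hθ
  set G : ℕ → ℝ := fun i => if h : i < n then g ⟨i, h⟩ else 0 with hGdef
  have hG : ∀ i : ℕ, G i = if h : i < n then g ⟨i, h⟩ else 0 := fun i => rfl
  have hn1 : (0:ℝ) < (n:ℝ) + 1 := by positivity
  have hθ0 : 0 < θ := by
    rw [hθ]
    have : (0:ℝ) < (k:ℝ) * π := by positivity
    positivity
  have hθπ : θ < π := by
    rw [hθ, div_lt_iff₀ hn1]
    have hk : (k:ℝ) < (n:ℝ) + 1 := by exact_mod_cast Nat.lt_succ_of_le hkn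
    nlinarith [Real.pi_pos]
  have hsinθ : 0 < Real.sin θ := Real.sin_pos_of_pos_of_lt_pi hθ0 hθπ
  have hsinh : 0 < Real.sin (θ / 2) :=
    Real.sin_pos_of_pos_of_lt_pi (by linarith) (by linarith [Real.pi_pos])
  have hcosh : 0 < Real.cos (θ / 2) := by
    apply Real.cos_pos_of_mem_Ioo
    constructor <;> [linarith [Real.pi_pos]; linarith]
  -- row equations
  have hrow : ∀ (m : ℕ) (hm : m < n),
      G (m + 1) + (if m = 0 then 0 else G (m - 1)) = 2 * Real.cos θ * G m := by
    intro m hm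
    have := congrFun heig ⟨m, hm⟩
    rw [pathAdj_mulVec_apply n g G hG m hm] at this
    rw [this]
    simp [hG, hm, smul_eq_mul]
  have h0 : G 1 = 2 * Real.cos θ * G 0 := by
    have := hrow 0 hn
    simpa using this
  have hrec : ∀ m : ℕ, m + 1 < n → G m + G (m + 2) = 2 * Real.cos θ * G (m + 1) := by
    intro m hm
    have := hrow (m + 1) hm
    simp only [if_neg (Nat.succ_ne_zero m), Nat.add_sub_cancel] at this
    linarith [this]
  -- main induction: G i * sin θ = G 0 * sin ((i+1) θ)
  have hmain : ∀ i : ℕ, i ≤ n → G i * Real.sin θ = G 0 * Real.sin ((i + 1) * θ) := by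
    intro i
    induction i using Nat.strong_induction_on with
    | _ i ih =>
      match i with
      | 0 => intro _; norm_num
      | 1 =>
        intro h1
        rw [h0]
        have : ((1:ℕ) + 1 : ℝ) * θ = 2 * θ := by norm_num
        push_cast
        rw [show ((1:ℝ) + 1) * θ = 2 * θ by ring, Real.sin_two_mul]
        ring
      | (i + 2) =>
        intro hle
        have hi1 : i + 1 < n := by omega
        have e1 := ih (i + 1) (by omega) (by omega)
        have e0 := ih i (by omega) (by omega)
        have hr := hrec i hi1
        have trig : Real.sin (((i:ℝ) + 2 + 1) * θ) =
            2 * Real.cos θ * Real.sin (((i:ℝ) + 1 + 1) * θ) - Real.sin (((i:ℝ) + 1) * θ) := by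
          have h1 := Real.sin_add (((i:ℝ) + 2) * θ) θ
          have h2 := Real.sin_sub (((i:ℝ) + 2) * θ) θ
          have a1 : ((i:ℝ) + 2 + 1) * θ = ((i:ℝ) + 2) * θ + θ := by ring
          have a2 : ((i:ℝ) + 1) * θ = ((i:ℝ) + 2) * θ - θ := by ring
          have a3 : ((i:ℝ) + 1 + 1) * θ = ((i:ℝ) + 2) * θ := by ring
          rw [a1, a2, a3, h1, h2]
          ring
        have hG2 : G (i + 2) = 2 * Real.cos θ * G (i + 1) - G i := by linarith
        rw [hG2]
        push_cast at e1 e0 ⊢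
        rw [trig]
        linear_combination 2 * Real.cos θ * e1 - e0
  have hsinθ' : Real.sin θ ≠ 0 := ne_of_gt hsinθ
  -- G 0 ≠ 0
  have hG0 : G 0 ≠ 0 := by
    intro h
    apply hg
    funext j
    have hj : (j : ℕ) ≤ n := le_of_lt j.isLt
    have := hmain j (le_of_lt j.isLt)
    rw [h, zero_mul] at this
    have hGj : G (j : ℕ) = 0 := (mul_eq_zero.mp this).resolve_right hsinθ'
    have : g j = G (j : ℕ) := by rw [hG]; simp
    rw [this, hGj]; rfl
  -- sum over Fin n equals sum of G over range n
  have hsumeq : ∑ i : Fin n, g i = ∑ i ∈ Finset.range n, G i := by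
    rw [← Fin.sum_univ_eq_sum_range G n]
    apply Finset.sum_congr rfl
    intro j _
    rw [hG]; simp
  -- telescoping sum
  set F : ℕ → ℝ := fun j => Real.cos ((j:ℝ) * θ + θ / 2) with hF
  have hterm : ∀ j : ℕ, Real.sin (((j:ℝ) + 1) * θ) * (2 * Real.sin (θ / 2)) = F j - F (j + 1) := by
    intro j
    simp only [hF]
    push_cast
    rw [show (j:ℝ) * θ + θ / 2 = ((j:ℝ) + 1) * θ - θ / 2 by ring, Real.cos_sub, Real.cos_add]
    ring
  have htel : (∑ i ∈ Finset.range n, Real.sin (((i:ℝ) + 1) * θ)) * (2 * Real.sin (θ / 2))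
      = Real.cos (θ / 2) - Real.cos ((n:ℝ) * θ + θ / 2) := by
    rw [Finset.sum_mul]
    have : ∀ i ∈ Finset.range n, Real.sin (((i:ℝ) + 1) * θ) * (2 * Real.sin (θ / 2))
        = F i - F (i + 1) := fun i _ => hterm i
    rw [Finset.sum_congr rfl this, Finset.sum_range_sub' F]
    simp [hF]
  have hend : Real.cos ((n:ℝ) * θ + θ / 2) = (-1) ^ k * Real.cos (θ / 2) := by
    have harg : (n:ℝ) * θ + θ / 2 = (k:ℝ) * π - θ / 2 := by
      rw [hθ]; field_simp; ring
    rw [harg, Real.cos_nat_mul_pi_sub]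
  -- combine
  have hsum2 : (∑ i ∈ Finset.range n, G i) * Real.sin θ
      = G 0 * ∑ i ∈ Finset.range n, Real.sin (((i:ℝ) + 1) * θ) := by
    rw [Finset.sum_mul, Finset.mul_sum]
    apply Finset.sum_congr rfl
    intro i hi
    have := hmain i (le_of_lt (Finset.mem_range.mp hi))
    push_cast at this
    exact this
  have key : (∑ i : Fin n, g i) * (Real.sin θ * (2 * Real.sin (θ / 2)))
      = G 0 * ((1 - (-1) ^ k) * Real.cos (θ / 2)) := by
    rw [hsumeq]
    calc (∑ i ∈ Finset.range n, G i) * (Real.sin θ * (2 * Real.sin (θ / 2)))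
        = ((∑ i ∈ Finset.range n, G i) * Real.sin θ) * (2 * Real.sin (θ / 2)) := by ring
      _ = (G 0 * ∑ i ∈ Finset.range n, Real.sin (((i:ℝ) + 1) * θ)) * (2 * Real.sin (θ / 2)) := by
          rw [hsum2]
      _ = G 0 * ((∑ i ∈ Finset.range n, Real.sin (((i:ℝ) + 1) * θ)) * (2 * Real.sin (θ / 2))) := by
          ring
      _ = G 0 * (Real.cos (θ / 2) - Real.cos ((n:ℝ) * θ + θ / 2)) := by rw [htel]
      _ = G 0 * ((1 - (-1) ^ k) * Real.cos (θ / 2)) := by rw [hend]; ring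
  have hpos : 0 < Real.sin θ * (2 * Real.sin (θ / 2)) := by positivity
  constructor
  · intro hzero
    rw [hzero, zero_mul] at key
    by_contra hodd
    rw [Nat.not_even_iff_odd] at hodd
    rw [hodd.neg_one_pow] at key
    have : G 0 * (2 * Real.cos (θ / 2)) = 0 := by linarith [key]
    have h2 : (2 : ℝ) * Real.cos (θ / 2) ≠ 0 := by positivity
    rcases mul_eq_zero.mp this with h | h
    · exact hG0 h
    · exact absurd h h2
  · intro heven
    rw [heven.neg_one_pow] at key
    simp only [sub_self, zero_mul, mul_zero] at key
    rcases mul_eq_zero.mp key with h | h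
    · exact h
    · exact absurd h (ne_of_gt hpos)
end

section
/- For every integer n ≥ 1, the polynomial φ_n has a smallest real zero α_n, and QEC(K_1+P_n) = −2α_n − 2. -/
open Real Polynomial Polynomial.Chebyshev

/-- The fan graph `K₁ + Pₘ` on vertex set `{0, 1, …, m}`: vertex `0` is joined to
every other vertex, and `1, 2, …, m` form a path. -/
def fanGraph (m : ℕ) : SimpleGraph (Fin (m + 1)) where
  Adj i j := i ≠ j ∧ (i = 0 ∨ j = 0 ∨ (i : ℕ) + 1 = (j : ℕ) ∨ (j : ℕ) + 1 = (i : ℕ))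
  symm := by
    constructor
    intro i j ⟨h1, h2⟩
    exact ⟨h1.symm, by tauto⟩
  loopless := by constructor; intro i ⟨h1, _⟩; exact h1 rfl

/-- The set of values `⟨f, Df⟩` where `D` is the distance matrix of the fan graph
`K₁ + Pₘ` and `f` ranges over unit vectors orthogonal to the all-ones vector;
its maximum is the quadratic embedding constant `QEC(K₁ + Pₘ)`. -/
def qecSet (m : ℕ) : Set ℝ :=
  {r : ℝ | ∃ f : Fin (m + 1) → ℝ, (∑ i, f i ^ 2) = 1 ∧ (∑ i, f i) = 0 ∧
    r = ∑ i, ∑ j, ((fanGraph m).dist i j : ℝ) * f i * f j}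

/-- The key polynomial `φₙ(x) = ((n+1)x² − 3x − n)Uₙ(x) + (x+1)(U_{n-1}(x) + 1)`. -/
noncomputable def phi (n : ℕ) : Polynomial ℝ :=
  (Polynomial.C ((n : ℝ) + 1) * Polynomial.X ^ 2 - Polynomial.C (3 : ℝ) * Polynomial.X -
      Polynomial.C (n : ℝ)) * U ℝ (n : ℤ) +
    (Polynomial.X + 1) * (U ℝ ((n : ℤ) - 1) + 1)


/-!
On the hyperplane `∑ f = 0` the distance matrix of the fan acts as `-2I - A`, so
`QEC(K₁ + Pₙ) = -2 - λ` where `λ` is the minimum of `⟨f, Af⟩` over unit vectors `f ⊥ 1`.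
A minimiser exists by compactness and satisfies the Lagrange condition `Af = λf + c·1`.
On the fan this says that `f`, read along the path, solves the Chebyshev recurrence
`f(k-1) + f(k+1) = λ f(k) + const` with `f(0) = f(n+1) = 0`; for `λ = 2x`, `x ≠ 1`, it is
therefore determined by two parameters, and the boundary condition at `n + 1` together with
`∑ f = 0` is a `2 × 2` linear system of determinant `-2 φₙ(x)` (by Cassini's identity for `Uₙ`).
So the `x ≠ 1` admitting a nonzero solution are exactly the zeros `x ≠ 1` of `φₙ`, and since the
test vector `e₀ - e₁` gives `λ ≤ -1`, `λ / 2` is the least zero of `φₙ`.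
-/

open Matrix Finset

section SumZero

variable {ι : Type*} [Fintype ι]

/-- The Lagrange condition for a critical point of `⟨f, Af⟩` on the unit sphere of the
hyperplane `∑ f = 0`. -/
def IsSumZeroEigen (A : Matrix ι ι ℝ) (μ : ℝ) (g : ι → ℝ) : Prop :=
  ∑ i, g i = 0 ∧ ∃ c : ℝ, A *ᵥ g = μ • g + c • 1

def sumZeroSphere (ι : Type*) [Fintype ι] : Set (ι → ℝ) :=
  {f | f ⬝ᵥ f = 1 ∧ ∑ i, f i = 0}

lemma IsSumZeroEigen.dotProduct_mulVec {A : Matrix ι ι ℝ} {μ : ℝ} {g : ι → ℝ}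
    (hg : IsSumZeroEigen A μ g) : g ⬝ᵥ A *ᵥ g = μ * (g ⬝ᵥ g) := by
  obtain ⟨hsum, c, hc⟩ := hg
  simp [hc, dotProduct_add, dotProduct_one, hsum]

lemma isCompact_sumZeroSphere : IsCompact (sumZeroSphere ι) := by
  refine Metric.isCompact_of_isClosed_isBounded ?_ ?_
  · exact (isClosed_eq (by unfold dotProduct; fun_prop) continuous_const).inter
      (isClosed_eq (by fun_prop) continuous_const)
  · refine (Metric.isBounded_iff_subset_closedBall 0).2 ⟨1, fun f hf => ?_⟩
    rw [mem_closedBall_zero_iff, pi_norm_le_iff_of_nonneg zero_le_one]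
    intro i
    have : f i * f i ≤ f ⬝ᵥ f :=
      single_le_sum (f := fun j => f j * f j) (fun j _ => mul_self_nonneg _) (mem_univ i)
    rw [Real.norm_eq_abs, abs_le_one_iff_mul_self_le_one]
    linarith [hf.1]

lemma inv_sqrt_smul_mem_sumZeroSphere {f : ι → ℝ} (hf : ∑ i, f i = 0) (hf0 : f ≠ 0) :
    (√(f ⬝ᵥ f))⁻¹ • f ∈ sumZeroSphere ι := by
  have hpos : 0 < f ⬝ᵥ f := dotProduct_star_self_pos_iff.2 hf0
  refine ⟨?_, ?_⟩
  · rw [smul_dotProduct, dotProduct_smul, smul_eq_mul, smul_eq_mul, ← mul_assoc, ← mul_inv,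
      Real.mul_self_sqrt hpos.le, inv_mul_cancel₀ hpos.ne']
  · simp [← mul_sum, hf]

lemma sumZeroSphere_nonempty [Nontrivial ι] : (sumZeroSphere ι).Nonempty := by
  classical
  obtain ⟨i, j, hij⟩ := exists_pair_ne ι
  refine ⟨_, inv_sqrt_smul_mem_sumZeroSphere (f := Pi.single i 1 - Pi.single j 1) ?_ ?_⟩
  · simp [sum_sub_distrib]
  · intro h
    simpa [hij] using congrFun h i

lemma exists_isMinOn_sumZeroSphere [Nontrivial ι] (A : Matrix ι ι ℝ) :
    ∃ g ∈ sumZeroSphere ι, IsMinOn (fun f => f ⬝ᵥ A *ᵥ f) (sumZeroSphere ι) g :=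
  isCompact_sumZeroSphere.exists_isMinOn sumZeroSphere_nonempty
    (by unfold dotProduct mulVec dotProduct; fun_prop)

lemma mul_dotProduct_le_of_isMinOn {A : Matrix ι ι ℝ} {g : ι → ℝ}
    (hmin : IsMinOn (fun f => f ⬝ᵥ A *ᵥ f) (sumZeroSphere ι) g) {f : ι → ℝ}
    (hf : ∑ i, f i = 0) : g ⬝ᵥ A *ᵥ g * (f ⬝ᵥ f) ≤ f ⬝ᵥ A *ᵥ f := by
  by_cases hf0 : f = 0
  · simp [hf0]
  have hpos : 0 < f ⬝ᵥ f := dotProduct_star_self_pos_iff.2 hf0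
  have h := isMinOn_iff.1 hmin _ (inv_sqrt_smul_mem_sumZeroSphere hf hf0)
  simp only [mulVec_smul, dotProduct_smul, smul_dotProduct, smul_eq_mul, ← mul_assoc, ← mul_inv,
    Real.mul_self_sqrt hpos.le] at h
  rw [le_inv_mul_iff₀ hpos] at h
  linarith

lemma sum_sub_mean_smul_one (r : ι → ℝ) :
    ∑ i, (r - ((∑ j, r j) / Fintype.card ι) • 1) i = 0 := by
  rcases isEmpty_or_nonempty ι with hι | hι
  · simp
  · have : (Fintype.card ι : ℝ) ≠ 0 := Nat.cast_ne_zero.2 Fintype.card_ne_zero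
    simp [sum_sub_distrib, Finset.card_univ, mul_div_cancel₀ _ this]

/-- The first-order condition: `t ↦ ⟨g + th, A(g + th)⟩ - μ |g + th|²` is a nonnegative quadratic
vanishing at `t = 0`, so its linear coefficient `2 ⟨h, Ag - μg⟩` vanishes. -/
lemma dotProduct_eq_zero_of_forall_le {A : Matrix ι ι ℝ} (hA : A.IsSymm) {μ : ℝ} {g : ι → ℝ}
    (hg : ∑ i, g i = 0) (hQ : g ⬝ᵥ A *ᵥ g = μ * (g ⬝ᵥ g))
    (hle : ∀ f : ι → ℝ, ∑ i, f i = 0 → μ * (f ⬝ᵥ f) ≤ f ⬝ᵥ A *ᵥ f)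
    {h : ι → ℝ} (hh : ∑ i, h i = 0) : h ⬝ᵥ (A *ᵥ g - μ • g) = 0 := by
  have hsymm : g ⬝ᵥ A *ᵥ h = h ⬝ᵥ A *ᵥ g := by
    rw [dotProduct_mulVec, ← mulVec_transpose, hA.eq, dotProduct_comm]
  have hquad : ∀ t : ℝ,
      0 ≤ (h ⬝ᵥ A *ᵥ h - μ * (h ⬝ᵥ h)) * (t * t) + 2 * (h ⬝ᵥ (A *ᵥ g - μ • g)) * t + 0 := by
    intro t
    have := hle (g + t • h) (by simp [sum_add_distrib, ← mul_sum, hg, hh])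
    simp only [mulVec_add, mulVec_smul, dotProduct_add, add_dotProduct, dotProduct_smul,
      smul_dotProduct, smul_eq_mul, dotProduct_sub, hsymm, dotProduct_comm g h] at this ⊢
    linear_combination this + hQ
  have := discrim_le_zero hquad
  rw [discrim] at this
  nlinarith [sq_nonneg (h ⬝ᵥ (A *ᵥ g - μ • g))]

lemma isSumZeroEigen_of_forall_le {A : Matrix ι ι ℝ} (hA : A.IsSymm) {μ : ℝ} {g : ι → ℝ}
    (hg : ∑ i, g i = 0) (hQ : g ⬝ᵥ A *ᵥ g = μ * (g ⬝ᵥ g))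
    (hle : ∀ f : ι → ℝ, ∑ i, f i = 0 → μ * (f ⬝ᵥ f) ≤ f ⬝ᵥ A *ᵥ f) :
    IsSumZeroEigen A μ g := by
  set r := A *ᵥ g - μ • g
  set c := (∑ i, r i) / Fintype.card ι
  have hsum := sum_sub_mean_smul_one r
  have hr : (r - c • 1) ⬝ᵥ r = 0 := dotProduct_eq_zero_of_forall_le hA hg hQ hle hsum
  have hc : (r - c • 1) ⬝ᵥ c • 1 = 0 := by rw [dotProduct_smul, dotProduct_one, hsum, smul_zero]
  have : r - c • 1 = 0 := by rw [← dotProduct_self_eq_zero, dotProduct_sub, hr, hc, sub_zero]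
  refine ⟨hg, c, ?_⟩
  rw [← sub_eq_zero.1 this, add_sub_cancel]

theorem Matrix.IsSymm.exists_isSumZeroEigen_isMinOn [Nontrivial ι] {A : Matrix ι ι ℝ}
    (hA : A.IsSymm) :
    ∃ g ∈ sumZeroSphere ι, IsSumZeroEigen A (g ⬝ᵥ A *ᵥ g) g ∧
      ∀ f : ι → ℝ, ∑ i, f i = 0 → g ⬝ᵥ A *ᵥ g * (f ⬝ᵥ f) ≤ f ⬝ᵥ A *ᵥ f := by
  obtain ⟨g, hg, hmin⟩ := exists_isMinOn_sumZeroSphere A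
  have hle := fun f => mul_dotProduct_le_of_isMinOn hmin (f := f)
  exact ⟨g, hg, isSumZeroEigen_of_forall_le hA hg.2 (by rw [hg.1, mul_one]) hle, hle⟩

end SumZero

namespace Polynomial.Chebyshev

variable (R : Type*) [CommRing R]

theorem U_sq_sub_U_mul_U (n : ℤ) : U R n ^ 2 - U R (n + 1) * U R (n - 1) = 1 := by
  induction n using Int.induction_on with
  | zero => simp
  | succ k ih =>
    rw [show (k : ℤ) + 1 + 1 = k + 2 by ring, add_sub_cancel_right]
    linear_combination ih + U R (k + 1) * U_add_one R k - U R k * U_add_two R k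
  | pred k ih =>
    rw [sub_add_cancel, sub_sub, show (1 : ℤ) + 1 = 2 by norm_num]
    linear_combination ih + U R (-k - 1) * U_add_one R (-k) - U R (-k) * U_sub_two R (-k)

theorem two_mul_X_sub_one_mul_sum_U (j : ℤ) (m : ℕ) :
    2 * (X - 1) * ∑ k ∈ range m, U R (j + k) =
      U R (j + m) - U R (j + m - 1) - (U R j - U R (j - 1)) := by
  induction m with
  | zero => simp
  | succ m ih =>
    rw [sum_range_succ, Nat.cast_succ, ← add_assoc, add_sub_cancel_right]
    linear_combination ih - U_add_one R (j + m)

end Polynomial.Chebyshev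

namespace SimpleGraph

variable {V : Type*} {G : SimpleGraph V} [DecidableEq V] [DecidableRel G.Adj]

lemma dist_eq_of_forall_adj {v : V} (hv : ∀ w, w ≠ v → G.Adj v w) (u w : V) :
    G.dist u w = if u = w then 0 else if G.Adj u w then 1 else 2 := by
  split_ifs with huw hadj
  · simp [huw]
  · exact dist_eq_one_iff_adj.2 hadj
  · have hu : u ≠ v := fun h => hadj (h ▸ hv w fun h' => huw (h.trans h'.symm))
    have hw : w ≠ v := fun h => hadj (h ▸ (hv u hu).symm)
    have : G.edist u w = 2 := edist_eq_two_iff.2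
      ⟨huw, hadj, v, (hv u hu).symm, (hv w hw).symm⟩
    simp [SimpleGraph.dist, this]

variable [Fintype V]

lemma sum_dist_mul_mul_of_forall_adj {v : V} (hv : ∀ w, w ≠ v → G.Adj v w) {f : V → ℝ}
    (hf : ∑ i, f i = 0) :
    ∑ i, ∑ j, (G.dist i j : ℝ) * f i * f j = -2 * (f ⬝ᵥ f) - f ⬝ᵥ G.adjMatrix ℝ *ᵥ f := by
  have hd : ∀ i j, (G.dist i j : ℝ) = 2 - (if i = j then 2 else 0) - G.adjMatrix ℝ i j := by
    intro i j
    rw [dist_eq_of_forall_adj hv, adjMatrix_apply]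
    split_ifs <;> simp_all
    norm_num
  have hcross : ∑ i, ∑ j, 2 * (f i * f j) = 0 := by simp [← mul_sum, hf]
  simp only [hd, sub_mul, sum_sub_distrib, dotProduct, mulVec, ite_mul, zero_mul, sum_ite_eq,
    mem_univ, if_true, mul_sum, mul_assoc, hcross, neg_mul, sum_neg_distrib, mul_left_comm (f _)]
  ring

lemma le_neg_one_of_forall_le {u v : V} (huv : G.Adj u v) {μ : ℝ}
    (hle : ∀ f : V → ℝ, ∑ i, f i = 0 → μ * (f ⬝ᵥ f) ≤ f ⬝ᵥ G.adjMatrix ℝ *ᵥ f) : μ ≤ -1 := by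
  have h := hle (Pi.single u 1 - Pi.single v 1) (by simp [sum_sub_distrib])
  have hnorm : (Pi.single u 1 - Pi.single v 1 : V → ℝ) ⬝ᵥ (Pi.single u 1 - Pi.single v 1) = 2 := by
    norm_num [dotProduct_sub, huv.ne, huv.ne.symm]
  have hQ : (Pi.single u 1 - Pi.single v 1) ⬝ᵥ G.adjMatrix ℝ *ᵥ (Pi.single u 1 - Pi.single v 1) =
      -2 := by
    norm_num [mulVec_sub, dotProduct_sub, huv, huv.symm]
  rw [hnorm, hQ] at h
  linarith

end SimpleGraph

instance (m : ℕ) : DecidableRel (fanGraph m).Adj := fun i j =>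
  inferInstanceAs (Decidable (i ≠ j ∧ _))

lemma fanGraph_zero_adj {n : ℕ} {w : Fin (n + 1)} (hw : w ≠ 0) : (fanGraph n).Adj 0 w :=
  ⟨hw.symm, Or.inl rfl⟩

namespace Fan

variable {n : ℕ} {x a b : ℝ}

/-- The values of `g` along the path `1, …, n`, extended by `0` at `k = 0` and `k > n`, so that
the row of `A` at every path vertex `k` reads `g 0 + pathExt g (k - 1) + pathExt g (k + 1)`. -/
def pathExt (g : Fin (n + 1) → ℝ) (k : ℕ) : ℝ :=
  if h : k ≠ 0 ∧ k < n + 1 then g ⟨k, h.2⟩ else 0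

lemma pathExt_succ (g : Fin (n + 1) → ℝ) {k : ℕ} (hk : k < n) :
    pathExt g (k + 1) = g ⟨k + 1, by omega⟩ :=
  dif_pos ⟨k.succ_ne_zero, by omega⟩

lemma pathExt_of_lt (g : Fin (n + 1) → ℝ) {k : ℕ} (hk : n < k) : pathExt g k = 0 :=
  dif_neg (by omega)

lemma sum_eq_add_sum_pathExt (g : Fin (n + 1) → ℝ) :
    ∑ i, g i = g 0 + ∑ k ∈ range n, pathExt g (k + 1) := by
  rw [Fin.sum_univ_succ, ← Fin.sum_univ_eq_sum_range]
  simp [pathExt, Fin.succ]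

lemma adjMatrix_mulVec_zero (g : Fin (n + 1) → ℝ) :
    ((fanGraph n).adjMatrix ℝ *ᵥ g) 0 = ∑ i, g i - g 0 := by
  simp only [mulVec, dotProduct, SimpleGraph.adjMatrix_apply, Fin.sum_univ_succ]
  simp [fanGraph, (Fin.succ_ne_zero _).symm]

lemma adjMatrix_mulVec_succ (g : Fin (n + 1) → ℝ) {k : ℕ} (hk : k < n) :
    ((fanGraph n).adjMatrix ℝ *ᵥ g) ⟨k + 1, by omega⟩ = g 0 + pathExt g k + pathExt g (k + 2) := by
  have hrow : ∀ j : Fin (n + 1), (fanGraph n).adjMatrix ℝ ⟨k + 1, by omega⟩ j * g j =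
      (if (j : ℕ) = 0 then g 0 else 0) + (if (j : ℕ) = k then pathExt g k else 0) +
        (if (j : ℕ) = k + 2 then pathExt g (k + 2) else 0) := by
    intro j
    obtain ⟨j, hj⟩ := j
    simp only [SimpleGraph.adjMatrix_apply, fanGraph, pathExt, ne_eq, Fin.ext_iff, Fin.val_zero]
    split_ifs <;> first | omega | (subst_vars; simp_all)
  simp only [mulVec, dotProduct, hrow, sum_add_distrib]
  rw [Fin.sum_univ_eq_sum_range (fun j => if j = 0 then g 0 else 0),
    Fin.sum_univ_eq_sum_range (fun j => if j = k then pathExt g k else 0),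
    Fin.sum_univ_eq_sum_range (fun j => if j = k + 2 then pathExt g (k + 2) else 0)]
  simp only [sum_ite_eq', mem_range, if_pos (Nat.succ_pos n), if_pos (show k < n + 1 by omega)]
  split_ifs
  · rfl
  · rw [pathExt_of_lt g (k := k + 2) (by omega)]

lemma isSumZeroEigen_iff {μ : ℝ} {g : Fin (n + 1) → ℝ} :
    IsSumZeroEigen ((fanGraph n).adjMatrix ℝ) μ g ↔ ∑ i, g i = 0 ∧
      ∀ k < n, pathExt g k + pathExt g (k + 2) = μ * pathExt g (k + 1) - (2 + μ) * g 0 := by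
  have row : ∀ c i, ((fanGraph n).adjMatrix ℝ *ᵥ g) i = (μ • g + c • 1) i ↔
      ((fanGraph n).adjMatrix ℝ *ᵥ g) i = μ * g i + c := by simp
  constructor
  · rintro ⟨hsum, c, hc⟩
    have h0 := (row c 0).1 (congrFun hc 0)
    rw [adjMatrix_mulVec_zero, hsum] at h0
    refine ⟨hsum, fun k hk => ?_⟩
    have hk' := (row c _).1 (congrFun hc ⟨k + 1, by omega⟩)
    rw [adjMatrix_mulVec_succ g hk, ← pathExt_succ g hk] at hk'
    linear_combination hk' - h0
  · rintro ⟨hsum, hrec⟩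
    refine ⟨hsum, -(1 + μ) * g 0, funext fun i => (row _ i).2 ?_⟩
    rcases i with ⟨_ | k, hk⟩
    · rw [Fin.mk_zero, adjMatrix_mulVec_zero, hsum]
      ring
    · have hk' : k < n := by omega
      rw [adjMatrix_mulVec_succ g hk', ← pathExt_succ g hk']
      linear_combination hrec k hk'

/-- The general solution, with `P 0 = 0`, of `P (k - 1) + P (k + 1) = 2x P k - 2(x + 1)(x - 1)a`:
the constant particular solution `(1 + x) a` plus a combination of `U_{k-2}(x)` and `U_{k-1}(x)`.
-/
noncomputable def profile (x a b : ℝ) (k : ℤ) : ℝ :=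
  (1 + x) * a * (1 + (U ℝ (k - 2)).eval x) + b * (U ℝ (k - 1)).eval x

@[simp] lemma profile_zero : profile x a b 0 = 0 := by simp [profile]

@[simp] lemma profile_one : profile x a b 1 = (1 + x) * a + b := by simp [profile]

lemma profile_add_profile_add_two (k : ℤ) :
    profile x a b k + profile x a b (k + 2) =
      2 * x * profile x a b (k + 1) - (2 + 2 * x) * ((x - 1) * a) := by
  have h1 := congrArg (eval x) (U_add_two ℝ (k - 2))
  have h2 := congrArg (eval x) (U_add_two ℝ (k - 1))
  simp only [eval_sub, eval_mul, eval_ofNat, eval_X] at h1 h2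
  simp only [profile]
  ring_nf at h1 h2 ⊢
  linear_combination (1 + x) * a * h1 + b * h2

lemma two_mul_sub_one_mul_sum_profile (m : ℕ) :
    2 * (x - 1) * ∑ k ∈ range m, profile x a b (k + 1) =
      2 * m * (x ^ 2 - 1) * a + (1 + x) * a * ((U ℝ (m - 1)).eval x - (U ℝ (m - 2)).eval x - 1) +
        b * ((U ℝ m).eval x - (U ℝ (m - 1)).eval x - 1) := by
  have s0 := congrArg (eval x) (two_mul_X_sub_one_mul_sum_U ℝ 0 m)
  have s1 := congrArg (eval x) (two_mul_X_sub_one_mul_sum_U ℝ (-1) m)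
  norm_num [eval_finsetSum] at s0 s1
  simp only [profile, sum_add_distrib, ← mul_sum, sum_const, card_range, nsmul_eq_mul]
  ring_nf at s0 s1 ⊢
  linear_combination b * s0 + (1 + x) * a * s1

noncomputable def profileVec (n : ℕ) (x a b : ℝ) : Fin (n + 1) → ℝ :=
  fun i => if i = 0 then (x - 1) * a else profile x a b (i : ℕ)

@[simp] lemma profileVec_zero : profileVec n x a b 0 = (x - 1) * a := if_pos rfl

lemma pathExt_profileVec {k : ℕ} (hk : k ≤ n) :
    pathExt (profileVec n x a b) k = profile x a b k := by
  rcases k.eq_zero_or_pos with rfl | hk0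
  · simp [pathExt]
  · rw [pathExt, dif_pos ⟨hk0.ne', by omega⟩, profileVec, if_neg (Fin.ne_of_val_ne hk0.ne')]

lemma sum_profileVec :
    ∑ i, profileVec n x a b i = (x - 1) * a + ∑ k ∈ range n, profile x a b (k + 1) := by
  rw [sum_eq_add_sum_pathExt, profileVec_zero]
  refine congrArg _ (sum_congr rfl fun k hk => ?_)
  rw [pathExt_profileVec (by simp at hk; omega)]
  push_cast
  rfl

noncomputable def constraintMatrix (n : ℕ) (x : ℝ) : Matrix (Fin 2) (Fin 2) ℝ :=
  !![(1 + x) * (1 + (U ℝ (n - 1)).eval x), (U ℝ n).eval x;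
    2 * (x - 1) ^ 2 + 2 * n * (x ^ 2 - 1) +
      (1 + x) * ((U ℝ (n - 1)).eval x - (U ℝ (n - 2)).eval x - 1),
    (U ℝ n).eval x - (U ℝ (n - 1)).eval x - 1]

lemma constraintMatrix_mulVec : constraintMatrix n x *ᵥ ![a, b] =
    ![profile x a b (n + 1), 2 * (x - 1) * ∑ i, profileVec n x a b i] := by
  ext i
  fin_cases i
  · simp [constraintMatrix, profile, show (n : ℤ) + 1 - 2 = n - 1 by ring]
    ring
  · simp [constraintMatrix, sum_profileVec, mul_add, two_mul_sub_one_mul_sum_profile]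
    ring

lemma det_constraintMatrix : (constraintMatrix n x).det = -2 * (phi n).eval x := by
  have hpell := congrArg (eval x) (U_sq_sub_U_mul_U ℝ ((n : ℤ) - 1))
  simp only [eval_sub, eval_pow, eval_mul, eval_one, sub_add_cancel, sub_sub] at hpell
  norm_num at hpell
  simp [det_fin_two_of, constraintMatrix, phi]
  linear_combination (-(1 + x)) * hpell

lemma isSumZeroEigen_profileVec_iff (hn : 1 ≤ n) (hx : x ≠ 1) :
    IsSumZeroEigen ((fanGraph n).adjMatrix ℝ) (2 * x) (profileVec n x a b) ↔
      constraintMatrix n x *ᵥ ![a, b] = 0 := by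
  have hx1 : 2 * (x - 1) ≠ 0 := mul_ne_zero two_ne_zero (sub_ne_zero.2 hx)
  have hrec : (∀ k < n, pathExt (profileVec n x a b) k + pathExt (profileVec n x a b) (k + 2) =
      2 * x * pathExt (profileVec n x a b) (k + 1) - (2 + 2 * x) * profileVec n x a b 0) ↔
      profile x a b (n + 1) = 0 := by
    constructor
    · intro h
      obtain ⟨m, rfl⟩ : ∃ m, n = m + 1 := ⟨n - 1, by omega⟩
      have hm := h m (by omega)
      rw [pathExt_profileVec (k := m) (by omega), pathExt_profileVec (k := m + 1) le_rfl,
        pathExt_of_lt (k := m + 2) _ (by omega), profileVec_zero] at hm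
      rw [show ((m + 1 : ℕ) : ℤ) + 1 = m + 2 by push_cast; ring]
      push_cast at hm
      linear_combination profile_add_profile_add_two (x := x) (a := a) (b := b) m - hm
    · intro h k hk
      have hk2 : pathExt (profileVec n x a b) (k + 2) = profile x a b ((k + 2 : ℕ) : ℤ) := by
        rcases Nat.lt_or_ge (k + 1) n with hk' | hk'
        · exact pathExt_profileVec (by omega)
        · rw [pathExt_of_lt _ (by omega), show k + 2 = n + 1 by omega]
          exact_mod_cast h.symm
      rw [pathExt_profileVec (k := k) (by omega), pathExt_profileVec (k := k + 1) (by omega), hk2,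
        profileVec_zero]
      push_cast
      linear_combination profile_add_profile_add_two (x := x) (a := a) (b := b) k
  rw [isSumZeroEigen_iff, hrec, constraintMatrix_mulVec]
  simp [hx1, and_comm]

lemma exists_eq_profileVec_of_isSumZeroEigen (hx : x ≠ 1) {g : Fin (n + 1) → ℝ}
    (hg : IsSumZeroEigen ((fanGraph n).adjMatrix ℝ) (2 * x) g) :
    ∃ a b, g = profileVec n x a b := by
  set a := g 0 / (x - 1)
  set b := pathExt g 1 - (1 + x) * a
  refine ⟨a, b, ?_⟩
  have hg0 : g 0 = (x - 1) * a := (mul_div_cancel₀ _ (sub_ne_zero.2 hx)).symm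
  have hrec := (isSumZeroEigen_iff.1 hg).2
  have hpath : ∀ k ≤ n, pathExt g k = profile x a b k ∧
      pathExt g (k + 1) = profile x a b ((k + 1 : ℕ) : ℤ) := by
    intro k
    induction k with
    | zero => simp [pathExt, b]
    | succ k ih =>
      intro hk
      obtain ⟨h0, h1⟩ := ih (by omega)
      refine ⟨h1, ?_⟩
      have := hrec k (by omega)
      rw [h0, h1, hg0] at this
      rw [show ((k + 1 + 1 : ℕ) : ℤ) = k + 2 by push_cast; ring]
      push_cast at this
      linear_combination this - profile_add_profile_add_two (x := x) (a := a) (b := b) k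
  funext i
  rcases i with ⟨_ | k, hk⟩
  · exact hg0
  · rw [profileVec, if_neg (Fin.ne_of_val_ne k.succ_ne_zero), ← pathExt_succ g (by omega)]
    exact (hpath (k + 1) (by omega)).1

lemma profileVec_eq_zero_iff (hn : 1 ≤ n) (hx : x ≠ 1) :
    profileVec n x a b = 0 ↔ a = 0 ∧ b = 0 := by
  constructor
  · intro h
    have ha : a = 0 := by simpa [sub_ne_zero.2 hx] using congrFun h 0
    have hb := congrFun h ⟨1, by omega⟩
    rw [profileVec, if_neg (Fin.ne_of_val_ne one_ne_zero)] at hb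
    simpa [ha] using hb
  · rintro ⟨rfl, rfl⟩
    funext i
    simp [profileVec, profile]

theorem exists_ne_zero_isSumZeroEigen_iff (hn : 1 ≤ n) (hx : x ≠ 1) :
    (∃ g ≠ 0, IsSumZeroEigen ((fanGraph n).adjMatrix ℝ) (2 * x) g) ↔ (phi n).eval x = 0 := by
  have hdet : (phi n).eval x = 0 ↔ (constraintMatrix n x).det = 0 := by
    simp [det_constraintMatrix]
  rw [hdet, ← exists_mulVec_eq_zero_iff]
  constructor
  · rintro ⟨g, hg0, hg⟩
    obtain ⟨a, b, rfl⟩ := exists_eq_profileVec_of_isSumZeroEigen hx hg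
    refine ⟨_, fun h => hg0 ?_, (isSumZeroEigen_profileVec_iff hn hx).1 hg⟩
    simpa [profileVec_eq_zero_iff hn hx] using h
  · rintro ⟨v, hv0, hv⟩
    have hv' : v = ![v 0, v 1] := by
      ext i
      fin_cases i <;> rfl
    refine ⟨profileVec n x (v 0) (v 1), fun h => hv0 ?_,
      (isSumZeroEigen_profileVec_iff hn hx).2 (hv' ▸ hv)⟩
    rw [hv', ((profileVec_eq_zero_iff hn hx).1 h).1, ((profileVec_eq_zero_iff hn hx).1 h).2]
    simp

lemma isLeast_eval_phi_eq_zero (hn : 1 ≤ n) {μ : ℝ} {g : Fin (n + 1) → ℝ}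
    (hg : IsSumZeroEigen ((fanGraph n).adjMatrix ℝ) μ g) (hg0 : g ≠ 0)
    (hmin : ∀ f, ∑ i, f i = 0 → μ * (f ⬝ᵥ f) ≤ f ⬝ᵥ (fanGraph n).adjMatrix ℝ *ᵥ f) (hμ : μ < 2) :
    IsLeast {x : ℝ | (phi n).eval x = 0} (μ / 2) := by
  refine ⟨(exists_ne_zero_isSumZeroEigen_iff hn (by linarith)).1
    ⟨g, hg0, by rwa [mul_div_cancel₀ _ two_ne_zero]⟩, fun y hy => ?_⟩
  by_contra! hy'
  obtain ⟨f, hf0, hf⟩ := (exists_ne_zero_isSumZeroEigen_iff hn (by linarith)).2 hy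
  have hpos : 0 < f ⬝ᵥ f := dotProduct_star_self_pos_iff.2 hf0
  have := hmin f hf.1
  rw [hf.dotProduct_mulVec] at this
  nlinarith

lemma isGreatest_qecSet {g : Fin (n + 1) → ℝ} (hg : g ∈ sumZeroSphere (Fin (n + 1)))
    (hmin : ∀ f, ∑ i, f i = 0 →
      g ⬝ᵥ (fanGraph n).adjMatrix ℝ *ᵥ g * (f ⬝ᵥ f) ≤ f ⬝ᵥ (fanGraph n).adjMatrix ℝ *ᵥ f) :
    IsGreatest (qecSet n) (-2 - g ⬝ᵥ (fanGraph n).adjMatrix ℝ *ᵥ g) := by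
  have hdist (f : Fin (n + 1) → ℝ) := (fanGraph n).sum_dist_mul_mul_of_forall_adj (v := 0)
    (fun _ => fanGraph_zero_adj) (f := f)
  have hsq (f : Fin (n + 1) → ℝ) : ∑ i, f i ^ 2 = f ⬝ᵥ f := by simp [dotProduct, sq]
  refine ⟨⟨g, by rw [hsq, hg.1], hg.2, by rw [hdist g hg.2, hg.1]; ring⟩, ?_⟩
  rintro r ⟨f, hf1, hf0, rfl⟩
  have hf : f ⬝ᵥ f = 1 := (hsq f).symm.trans hf1
  have := hmin f hf0
  rw [hf] at this
  rw [hdist f hf0, hf]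
  linarith

end Fan

/-- For every `n ≥ 1`, the polynomial `φₙ` has a smallest real
zero `αₙ`, and `QEC(K₁ + Pₙ) = −2αₙ − 2`. -/
theorem qec_fan_eq_minimal_zero_phi (n : ℕ) (hn : 1 ≤ n) :
    ∃ α : ℝ, IsLeast {x : ℝ | (phi n).eval x = 0} α ∧
      IsGreatest (qecSet n) (-2 * α - 2) := by
  have : Nontrivial (Fin (n + 1)) := Fin.nontrivial_iff_two_le.2 (by omega)
  obtain ⟨g, hg, hgeig, hmin⟩ :=
    ((fanGraph n).isSymm_adjMatrix (α := ℝ)).exists_isSumZeroEigen_isMinOn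
  have hμ := SimpleGraph.le_neg_one_of_forall_le
    (fanGraph_zero_adj (w := ⟨1, by omega⟩) (Fin.ne_of_val_ne one_ne_zero)) hmin
  have hg0 : g ≠ 0 := by
    rintro rfl
    simp [sumZeroSphere] at hg
  refine ⟨_, Fan.isLeast_eval_phi_eq_zero hn hgeig hg0 hmin (by linarith), ?_⟩
  convert Fan.isGreatest_qecSet hg hmin using 1
  ring
end
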